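/- arXiv:1111.0040 — 7 statements merged into one kernel-verified Lean document; each statement's English description precedes it below -/
import Mathlib

section
/- Let l1, ..., l_{k+1} ∈ {0,1} be Boolean values. Then the number of unsatisfied clauses in the chain {l1, ¬l1 ∨ l2, ¬l2 ∨ l3, ..., ¬l_k ∨ l_{k+1}, ¬l_{k+1}} equals 1 plus the number of unsatisfied clauses in {l1 ∨ ¬l2, l2 ∨ ¬l3, ..., l_k ∨ ¬l_{k+1}}. Equivalently: (1-l1) + Σ_{i=1}^{k} l_i(1-l_{i+1}) + l_{k+1} = 1 + Σ_{i=1}^{k} (1-l_i)·l_{i+1} (Rule 4, chain/linear unit resolution, is sound for Max-SAT). -/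
/-- Rule 4 (chain / linear unit resolution) is sound for Max-SAT: for `k ≥ 1` and
Booleans `l1, ..., l_{k+1} ∈ {0,1}`,
`(1-l1) + Σ_{i=1}^{k} l_i(1-l_{i+1}) + l_{k+1} = 1 + Σ_{i=1}^{k} (1-l_i)·l_{i+1}`,
i.e., the number of unsatisfied clauses in `{l1, ¬l1 ∨ l2, ..., ¬l_k ∨ l_{k+1}, ¬l_{k+1}}`
equals 1 plus that in `{l1 ∨ ¬l2, ..., l_k ∨ ¬l_{k+1}}`. -/
theorem rule4_chain_sound (k : ℕ) (hk : 1 ≤ k) (l : ℕ → ℤ)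
    (hl : ∀ i, l i = 0 ∨ l i = 1) :
    (1 - l 1) + (∑ i ∈ Finset.Icc 1 k, l i * (1 - l (i + 1))) + l (k + 1) =
      1 + ∑ i ∈ Finset.Icc 1 k, (1 - l i) * l (i + 1) := by
  induction k with
  | zero => omega
  | succ n ih =>
    rcases Nat.eq_or_lt_of_le hk with h | h
    · simp [← h]; ring
    · have hn : 1 ≤ n := Nat.lt_succ_iff.mp h
      rw [Finset.sum_Icc_succ_top (by omega), Finset.sum_Icc_succ_top (by omega)]
      have := ih hn
      ring_nf
      ring_nf at this
      linarith
end

section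
/- For all Boolean values l1, l2, l3 ∈ {0,1}: (1-l1) + l1(1-l2) + l1(1-l3) + l2·l3 = 1 + (1-l1)·l2·l3 + l1·(1-l2)·(1-l3). Consequently, for every truth assignment, the number of unsatisfied clauses in {l1, ¬l1 ∨ l2, ¬l1 ∨ l3, ¬l2 ∨ ¬l3} equals the number of unsatisfied clauses in {□, l1 ∨ ¬l2 ∨ ¬l3, ¬l1 ∨ l2 ∨ l3} (Rule 5 is sound for Max-SAT). -/
/-- Rule 5 is sound for Max-SAT: for Booleans `l1, l2, l3 ∈ {0,1}`,
`(1-l1) + l1(1-l2) + l1(1-l3) + l2·l3 = 1 + (1-l1)·l2·l3 + l1·(1-l2)·(1-l3)`,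
i.e., the number of unsatisfied clauses in `{l1, ¬l1 ∨ l2, ¬l1 ∨ l3, ¬l2 ∨ ¬l3}`
equals that in `{□, l1 ∨ ¬l2 ∨ ¬l3, ¬l1 ∨ l2 ∨ l3}`. -/
theorem rule5_sound (l1 l2 l3 : ℤ) (h1 : l1 = 0 ∨ l1 = 1) (h2 : l2 = 0 ∨ l2 = 1)
    (h3 : l3 = 0 ∨ l3 = 1) :
    (1 - l1) + l1 * (1 - l2) + l1 * (1 - l3) + l2 * l3 =
      1 + (1 - l1) * l2 * l3 + l1 * (1 - l2) * (1 - l3) := by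
  rcases h1 with h1|h1 <;> rcases h2 with h2|h2 <;> rcases h3 with h3|h3 <;> subst h1 <;> subst h2 <;> subst h3 <;> ring
end

section
/- Let k ≥ 1 and l1, ..., l_{k+3} ∈ {0,1}. Then the number of unsatisfied clauses in {l1, ¬l1 ∨ l2, ¬l2 ∨ l3, ..., ¬l_k ∨ l_{k+1}, ¬l_{k+1} ∨ l_{k+2}, ¬l_{k+1} ∨ l_{k+3}, ¬l_{k+2} ∨ ¬l_{k+3}} equals the number of unsatisfied clauses in {□, l1 ∨ ¬l2, l2 ∨ ¬l3, ..., l_k ∨ ¬l_{k+1}, l_{k+1} ∨ ¬l_{k+2} ∨ ¬l_{k+3}, ¬l_{k+1} ∨ l_{k+2} ∨ l_{k+3}}, i.e., (1-l1) + Σ_{i=1}^{k} l_i(1-l_{i+1}) + l_{k+1}(1-l_{k+2}) + l_{k+1}(1-l_{k+3}) + l_{k+2}l_{k+3} = 1 + Σ_{i=1}^{k} (1-l_i)l_{i+1} + (1-l_{k+1})l_{k+2}l_{k+3} + l_{k+1}(1-l_{k+2})(1-l_{k+3}) (Rule 6 is sound for Max-SAT). -/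
/-- Rule 6 is sound for Max-SAT: for `k ≥ 1` and Booleans `l1, ..., l_{k+3} ∈ {0,1}`,
`(1-l1) + Σ_{i=1}^{k} l_i(1-l_{i+1}) + l_{k+1}(1-l_{k+2}) + l_{k+1}(1-l_{k+3}) + l_{k+2}·l_{k+3}
 = 1 + Σ_{i=1}^{k} (1-l_i)l_{i+1} + (1-l_{k+1})l_{k+2}l_{k+3} + l_{k+1}(1-l_{k+2})(1-l_{k+3})`. -/
theorem rule6_sound (k : ℕ) (hk : 1 ≤ k) (l : ℕ → ℤ)
    (hl : ∀ i, l i = 0 ∨ l i = 1) :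
    (1 - l 1) + (∑ i ∈ Finset.Icc 1 k, l i * (1 - l (i + 1))) +
      l (k + 1) * (1 - l (k + 2)) + l (k + 1) * (1 - l (k + 3)) +
      l (k + 2) * l (k + 3) =
    1 + (∑ i ∈ Finset.Icc 1 k, (1 - l i) * l (i + 1)) +
      (1 - l (k + 1)) * l (k + 2) * l (k + 3) +
      l (k + 1) * (1 - l (k + 2)) * (1 - l (k + 3)) := by
  have key : ∀ n : ℕ, ∑ i ∈ Finset.Icc 1 n,
      (l i * (1 - l (i + 1)) - (1 - l i) * l (i + 1)) = l 1 - l (n + 1) := by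
    intro n
    induction n with
    | zero => simp
    | succ m ih =>
      rw [Finset.sum_Icc_succ_top (by omega), ih]
      ring
  have h2 : (∑ i ∈ Finset.Icc 1 k, l i * (1 - l (i + 1))) -
      (∑ i ∈ Finset.Icc 1 k, (1 - l i) * l (i + 1)) = l 1 - l (k + 1) := by
    rw [← Finset.sum_sub_distrib]; exact key k
  linear_combination h2
end

section
/- Weighted Rule 3 is sound: let w1, w2, w3 be nonnegative weights and w = min(w1, w2, w3). Then for all Booleans l1, l2 ∈ {0,1}, the weighted unsatisfied cost of {(l1, w1), (¬l1 ∨ ¬l2, w2), (l2, w3)} equals the weighted unsatisfied cost of {(□, w), (l1 ∨ l2, w), (l1, w1-w), (¬l1 ∨ ¬l2, w2-w), (l2, w3-w)}, i.e., w1(1-l1) + w2·l1·l2 + w3(1-l2) = w + w(1-l1)(1-l2) + (w1-w)(1-l1) + (w2-w)l1l2 + (w3-w)(1-l2). -/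
/-- Weighted Rule 3 is sound: with `w = min(w1, w2, w3)` and nonnegative weights,
`w1(1-l1) + w2·l1·l2 + w3(1-l2)
  = w + w(1-l1)(1-l2) + (w1-w)(1-l1) + (w2-w)l1·l2 + (w3-w)(1-l2)`
for all Booleans `l1, l2 ∈ {0,1}`. -/
theorem weighted_rule3_sound (l1 l2 w1 w2 w3 w : ℤ)
    (h1 : l1 = 0 ∨ l1 = 1) (h2 : l2 = 0 ∨ l2 = 1)
    (hw1 : 0 ≤ w1) (hw2 : 0 ≤ w2) (hw3 : 0 ≤ w3)
    (hw : w = min w1 (min w2 w3)) :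
    w1 * (1 - l1) + w2 * (l1 * l2) + w3 * (1 - l2) =
      w + w * ((1 - l1) * (1 - l2)) + (w1 - w) * (1 - l1) +
        (w2 - w) * (l1 * l2) + (w3 - w) * (1 - l2) := by
  rcases h1 with rfl | rfl <;> rcases h2 with rfl | rfl <;> ring
end

section
/- Weighted chain rule (weighted Rule 4) is sound: let l1, ..., l_{k+1} ∈ {0,1}, let w1, ..., w_{k+2} be nonnegative weights, and let w = min(w1, ..., w_{k+2}). Then w1(1-l1) + Σ_{i=1}^{k} w_{i+1}·l_i(1-l_{i+1}) + w_{k+2}·l_{k+1} = w + Σ_{i=1}^{k} w·(1-l_i)l_{i+1} + (w1-w)(1-l1) + Σ_{i=1}^{k} (w_{i+1}-w)·l_i(1-l_{i+1}) + (w_{k+2}-w)·l_{k+1}, for every assignment; i.e., the two weighted clause multisets of weighted Rule 4 have equal cost under every assignment. -/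
lemma telescope_aux (l : ℕ → ℤ) : ∀ k : ℕ,
    ∑ x ∈ Finset.Icc 1 k, (l x - l (x + 1)) = l 1 - l (k + 1) ∨ k = 0 := by
  intro k
  induction k with
  | zero => right; rfl
  | succ n ih =>
    left
    rcases ih with ih | h
    · rw [Finset.sum_Icc_succ_top (by omega), ih]; ring
    · subst h; simp

/-- Weighted Rule 4 (weighted chain rule) is sound: with nonnegative weights
`u 1, ..., u (k+2)` and `w = min(u 1, ..., u (k+2))`, for all Booleans
`l 1, ..., l (k+1) ∈ {0,1}`,
`u1(1-l1) + Σ_{i=1}^{k} u_{i+1}·l_i(1-l_{i+1}) + u_{k+2}·l_{k+1}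
 = w + Σ_{i=1}^{k} w·(1-l_i)l_{i+1} + (u1-w)(1-l1)
   + Σ_{i=1}^{k} (u_{i+1}-w)·l_i(1-l_{i+1}) + (u_{k+2}-w)·l_{k+1}`. -/
theorem weighted_rule4_sound (k : ℕ) (hk : 1 ≤ k) (l u : ℕ → ℤ) (w : ℤ)
    (hl : ∀ i, l i = 0 ∨ l i = 1)
    (hu : ∀ i ∈ Finset.Icc 1 (k + 2), 0 ≤ u i)
    (hw : w = (Finset.Icc 1 (k + 2)).inf' (Finset.nonempty_Icc.mpr (by omega)) u) :
    u 1 * (1 - l 1) + (∑ i ∈ Finset.Icc 1 k, u (i + 1) * (l i * (1 - l (i + 1)))) +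
      u (k + 2) * l (k + 1) =
    w + (∑ i ∈ Finset.Icc 1 k, w * ((1 - l i) * l (i + 1))) +
      (u 1 - w) * (1 - l 1) +
      (∑ i ∈ Finset.Icc 1 k, (u (i + 1) - w) * (l i * (1 - l (i + 1)))) +
      (u (k + 2) - w) * l (k + 1) := by
  have key : ∑ i ∈ Finset.Icc 1 k, (l i * (1 - l (i + 1)) - (1 - l i) * l (i + 1))
      = l 1 - l (k + 1) := by
    have h1 : ∀ i, l i * (1 - l (i + 1)) - (1 - l i) * l (i + 1) = l i - l (i + 1) := by
      intro i; ring
    simp only [h1]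
    rcases telescope_aux l k with h | h
    · exact h
    · omega
  have split : ∑ i ∈ Finset.Icc 1 k, u (i + 1) * (l i * (1 - l (i + 1)))
      = ∑ i ∈ Finset.Icc 1 k, (u (i + 1) - w) * (l i * (1 - l (i + 1)))
        + ∑ i ∈ Finset.Icc 1 k, w * (l i * (1 - l (i + 1))) := by
    rw [← Finset.sum_add_distrib]
    exact Finset.sum_congr rfl (fun i _ => by ring)
  have hkey : ∑ i ∈ Finset.Icc 1 k, w * (l i * (1 - l (i + 1)))
      - ∑ i ∈ Finset.Icc 1 k, w * ((1 - l i) * l (i + 1)) = w * (l 1 - l (k + 1)) := by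
    rw [← Finset.sum_sub_distrib, ← key, Finset.mul_sum]
    exact Finset.sum_congr rfl (fun i _ => by ring)
  linear_combination split + hkey
end

section
/- The chain resolution rule is sound for weighted Max-SAT: given weighted clauses {(l1, u1)} ∪ {(¬l_i ∨ l_{i+1}, u_{i+1}) : 1 ≤ i < k} ∪ {(¬l_k, u_{k+1})} with nonnegative weights, and setting m_i = min(u_1, ..., u_i), the replacement formula {(l_i, m_i - m_{i+1}) : 1 ≤ i ≤ k} ∪ {(¬l_i ∨ l_{i+1}, u_{i+1} - m_{i+1}) : 1 ≤ i < k} ∪ {(l_i ∨ ¬l_{i+1}, m_{i+1}) : 1 ≤ i < k} ∪ {(¬l_k, u_{k+1} - m_{k+1})} ∪ {(□, m_{k+1})} has the same weighted cost under every 0/1 assignment of l1, ..., lk. -/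
/-- The chain resolution rule is sound for weighted Max-SAT: given the weighted
clauses `{(l1,u1)} ∪ {(¬l_i ∨ l_{i+1}, u_{i+1}) : 1 ≤ i < k} ∪ {(¬l_k, u_{k+1})}`
with nonnegative weights, and `m_1 = u_1`, `m_{i+1} = min(m_i, u_{i+1})`, the
replacement formula
`{(l_i, m_i - m_{i+1}) : 1 ≤ i ≤ k} ∪ {(¬l_i ∨ l_{i+1}, u_{i+1} - m_{i+1}) : 1 ≤ i < k}
 ∪ {(l_i ∨ ¬l_{i+1}, m_{i+1}) : 1 ≤ i < k} ∪ {(¬l_k, u_{k+1} - m_{k+1})} ∪ {(□, m_{k+1})}`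
has the same weighted cost under every 0/1 assignment. -/
theorem chain_resolution_sound (k : ℕ) (hk : 1 ≤ k) (l u m : ℕ → ℤ)
    (hl : ∀ i, l i = 0 ∨ l i = 1)
    (hu : ∀ i ∈ Finset.Icc 1 (k + 1), 0 ≤ u i)
    (hm1 : m 1 = u 1)
    (hm : ∀ i, 1 ≤ i → i ≤ k → m (i + 1) = min (m i) (u (i + 1))) :
    u 1 * (1 - l 1) +
      (∑ i ∈ Finset.Icc 1 (k - 1), u (i + 1) * (l i * (1 - l (i + 1)))) +
      u (k + 1) * l k =
    (∑ i ∈ Finset.Icc 1 k, (m i - m (i + 1)) * (1 - l i)) +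
      (∑ i ∈ Finset.Icc 1 (k - 1), (u (i + 1) - m (i + 1)) * (l i * (1 - l (i + 1)))) +
      (∑ i ∈ Finset.Icc 1 (k - 1), m (i + 1) * ((1 - l i) * l (i + 1))) +
      (u (k + 1) - m (k + 1)) * l k + m (k + 1) := by
  obtain ⟨n, rfl⟩ : ∃ n, k = n + 1 := ⟨k - 1, by omega⟩
  clear hk hl hu hm
  induction n with
  | zero =>
    norm_num
    linear_combination (l 1 - 1) * hm1
  | succ n ih =>
    simp only [Nat.add_sub_cancel] at ih ⊢
    rw [Finset.sum_Icc_succ_top (by omega : 1 ≤ n + 1),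
      Finset.sum_Icc_succ_top (by omega : 1 ≤ n + 1),
      Finset.sum_Icc_succ_top (by omega : 1 ≤ n + 1),
      Finset.sum_Icc_succ_top (by omega : 1 ≤ n + 1 + 1),
      Finset.sum_Icc_succ_top (by omega : 1 ≤ n + 1)] at *
    linear_combination ih
end

section
/- The cycle resolution rule is sound for weighted Max-SAT: given the weighted clauses {(¬l_i ∨ l_{i+1}, u_i) : 1 ≤ i < k} ∪ {(¬l_1 ∨ ¬l_k, u_k)} with nonnegative weights and m_i = min(u_1, ..., u_i), the formula {(¬l_1 ∨ l_i, m_{i-1}-m_i) : 2 ≤ i ≤ k} ∪ {(¬l_i ∨ l_{i+1}, u_i - m_i) : 2 ≤ i < k} ∪ {(¬l_1 ∨ l_i ∨ ¬l_{i+1}, m_i) : 2 ≤ i < k} ∪ {(l_1 ∨ ¬l_i ∨ l_{i+1}, m_i) : 2 ≤ i < k} ∪ {(¬l_1 ∨ ¬l_k, u_k - m_k)} ∪ {(¬l_1, m_k)} has the same weighted cost under every 0/1 assignment. -/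
theorem cycle_aux (k : ℕ) (hk : 2 ≤ k) (l u m : ℕ → ℤ)
    (hm1 : m 1 = u 1) :
    (∑ i ∈ Finset.Icc 1 (k - 1), u i * (l i * (1 - l (i + 1)))) +
      u k * (l 1 * l k) =
    (∑ i ∈ Finset.Icc 2 k, (m (i - 1) - m i) * (l 1 * (1 - l i))) +
      (∑ i ∈ Finset.Icc 2 (k - 1), (u i - m i) * (l i * (1 - l (i + 1)))) +
      (∑ i ∈ Finset.Icc 2 (k - 1), m i * (l 1 * ((1 - l i) * l (i + 1)))) +
      (∑ i ∈ Finset.Icc 2 (k - 1), m i * ((1 - l 1) * (l i * (1 - l (i + 1))))) +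
      (u k - m k) * (l 1 * l k) + m k * l 1 := by
  induction k, hk using Nat.le_induction with
  | base =>
      simp [Finset.sum_Icc_succ_top, show Finset.Icc 2 1 = ∅ from rfl]
      linear_combination (-(l 1 * (1 - l 2))) * hm1
  | succ k hk ih =>
      obtain ⟨j, rfl⟩ : ∃ j, k = j + 2 := ⟨k - 2, by omega⟩
      simp only [show j + 2 + 1 - 1 = j + 2 from rfl, show j + 2 - 1 = j + 1 from rfl] at *
      rw [Finset.sum_Icc_succ_top (by omega : 1 ≤ j + 2),
          Finset.sum_Icc_succ_top (by omega : 2 ≤ j + 2 + 1),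
          Finset.sum_Icc_succ_top (by omega : 2 ≤ j + 2),
          Finset.sum_Icc_succ_top (by omega : 2 ≤ j + 2),
          Finset.sum_Icc_succ_top (by omega : 2 ≤ j + 2),
          Finset.sum_Icc_succ_top (by omega : 2 ≤ j + 2)]
      rw [Finset.sum_Icc_succ_top (by omega : 2 ≤ j + 2)] at ih
      simp only [Nat.add_sub_cancel] at ih ⊢
      linear_combination ih


/-- The cycle resolution rule is sound for weighted Max-SAT: given the weighted
clauses `{(¬l_i ∨ l_{i+1}, u_i) : 1 ≤ i < k} ∪ {(¬l_1 ∨ ¬l_k, u_k)}` with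
nonnegative weights and `m_i = min(u_1, ..., u_i)`, the formula
`{(¬l_1 ∨ l_i, m_{i-1} - m_i) : 2 ≤ i ≤ k} ∪ {(¬l_i ∨ l_{i+1}, u_i - m_i) : 2 ≤ i < k}
 ∪ {(¬l_1 ∨ l_i ∨ ¬l_{i+1}, m_i) : 2 ≤ i < k} ∪ {(l_1 ∨ ¬l_i ∨ l_{i+1}, m_i) : 2 ≤ i < k}
 ∪ {(¬l_1 ∨ ¬l_k, u_k - m_k)} ∪ {(¬l_1, m_k)}`
has the same weighted cost under every 0/1 assignment. -/
theorem cycle_resolution_sound (k : ℕ) (hk : 2 ≤ k) (l u m : ℕ → ℤ)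
    (hl : ∀ i, l i = 0 ∨ l i = 1)
    (hu : ∀ i ∈ Finset.Icc 1 k, 0 ≤ u i)
    (hm1 : m 1 = u 1)
    (hm : ∀ i, 1 ≤ i → i < k → m (i + 1) = min (m i) (u (i + 1))) :
    (∑ i ∈ Finset.Icc 1 (k - 1), u i * (l i * (1 - l (i + 1)))) +
      u k * (l 1 * l k) =
    (∑ i ∈ Finset.Icc 2 k, (m (i - 1) - m i) * (l 1 * (1 - l i))) +
      (∑ i ∈ Finset.Icc 2 (k - 1), (u i - m i) * (l i * (1 - l (i + 1)))) +
      (∑ i ∈ Finset.Icc 2 (k - 1), m i * (l 1 * ((1 - l i) * l (i + 1)))) +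
      (∑ i ∈ Finset.Icc 2 (k - 1), m i * ((1 - l 1) * (l i * (1 - l (i + 1))))) +
      (u k - m k) * (l 1 * l k) + m k * l 1 :=
  cycle_aux k hk l u m hm1
end
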